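/- arXiv:2402.11785 — 3 statements merged into one kernel-verified Lean document; each statement's English description precedes it below -/
import Mathlib

section
/- Let V : Fin m → Fin n → EuclideanSpace ℂ (Fin 2) be an n-qubit UPB of size m. Suppose there are rows p ≠ q, columns i ≠ j, and vectors a, c with V p i = a, V q j = a, V p j = c, V q i = c, such that: (1) a and c are linearly independent and ⟪a, c⟫ ≠ 0; (2) multiplicity one: for every row r ≠ p, V r i is not a scalar multiple of a and V r j is not a scalar multiple of c, and for every row r ≠ q, V r i is not a scalar multiple of c and V r j is not a scalar multiple of a; (3) for every row r, ⟪V r i, a⟫ = 0 iff ⟪V r j, a⟫ = 0, and ⟪V r i, c⟫ = 0 iff ⟪V r j, c⟫ = 0. Then the family W obtained from V by swapping the entries of rows p and q in columns i and j (W p i = c, W p j = a, W q i = a, W q j = c, and W r k = V r k in all other positions) is again an n-qubit UPB of size m. -/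
open scoped InnerProductSpace

/-- A pairwise orthogonal product family of size `m` on `n` qubits. -/
def PairwiseOrthProdFamily {m n : ℕ}
    (V : Fin m → Fin n → EuclideanSpace ℂ (Fin 2)) : Prop :=
  (∀ p i, V p i ≠ 0) ∧ ∀ p q : Fin m, p ≠ q → ∃ i, ⟪V p i, V q i⟫_ℂ = 0

/-- Extendibility: a nonzero product vector orthogonal to every row exists. -/
def Extendible {m n : ℕ}
    (V : Fin m → Fin n → EuclideanSpace ℂ (Fin 2)) : Prop :=
  ∃ w : Fin n → EuclideanSpace ℂ (Fin 2),
    (∀ i, w i ≠ 0) ∧ ∀ p, ∃ i, ⟪w i, V p i⟫_ℂ = 0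

/-- An `n`-qubit unextendible product basis of size `m`. -/
def IsUPB {m n : ℕ}
    (V : Fin m → Fin n → EuclideanSpace ℂ (Fin 2)) : Prop :=
  PairwiseOrthProdFamily V ∧ m < 2 ^ n ∧ ¬ Extendible V

/-!
Orthogonality survives the swap because inside rows `p` and `q` it only permutes the columns
`i ↔ j`, and the orthogonality-pattern hypothesis says that any other row meets `a` and `c`
orthogonally in column `i` exactly when it does in column `j`.

Unextendibility survives because on columns `i, j` the swap also exchanges the rows `p ↔ q`.
A product vector `w` orthogonal to every row of the new family is then orthogonal to every row
of the old one, unless, say, it meets new row `p` in column `k ∈ {i, j}` (so `w k ⊥ V q k`) and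
new row `q` elsewhere. Then `w` meets old row `q` twice and misses old row `p`; replacing `w k` by
a vector orthogonal to `V p k` repairs this, since in `ℂ²` the vector `w k` is orthogonal only to
multiples of `V q k`, and by multiplicity one no other row has such an entry in column `k`.
-/

open Module

section InnerProduct

variable {𝕜 E : Type*} [RCLike 𝕜] [NormedAddCommGroup E] [InnerProductSpace 𝕜 E]

lemma exists_ne_zero_inner_eq_zero (hE : 1 < finrank 𝕜 E) (v : E) :
    ∃ x : E, x ≠ 0 ∧ ⟪x, v⟫_𝕜 = 0 := by
  have : FiniteDimensional 𝕜 E := finite_of_finrank_pos (by omega)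
  have hspan : finrank 𝕜 (𝕜 ∙ v) ≤ 1 := by
    simpa using finrank_span_le_card (R := 𝕜) ({v} : Set E)
  have hpos : 0 < finrank 𝕜 (𝕜 ∙ v)ᗮ := by
    have := (𝕜 ∙ v).finrank_add_finrank_orthogonal
    omega
  obtain ⟨⟨x, hx⟩, hx0⟩ := finrank_pos_iff_exists_ne_zero.1 hpos
  exact ⟨x, by simpa using hx0,
    inner_eq_zero_symm.1 (Submodule.mem_orthogonal_singleton_iff_inner_right.1 hx)⟩

lemma exists_eq_smul_of_inner_eq_zero (hE : finrank 𝕜 E = 2) {x u v : E} (hx : x ≠ 0)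
    (hu : u ≠ 0) (hxu : ⟪x, u⟫_𝕜 = 0) (hxv : ⟪x, v⟫_𝕜 = 0) : ∃ s : 𝕜, v = s • u := by
  have : Fact (finrank 𝕜 E = 1 + 1) := ⟨hE⟩
  have hu' : u ∈ (𝕜 ∙ x)ᗮ := Submodule.mem_orthogonal_singleton_iff_inner_right.2 hxu
  have hv' : v ∈ (𝕜 ∙ x)ᗮ := Submodule.mem_orthogonal_singleton_iff_inner_right.2 hxv
  obtain ⟨s, hs⟩ := (finrank_eq_one_iff_of_nonzero' (⟨u, hu'⟩ : (𝕜 ∙ x)ᗮ) (by simpa using hu)).1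
    (Submodule.finrank_orthogonal_span_singleton hx) ⟨v, hv'⟩
  exact ⟨s, by simpa using congrArg Subtype.val hs.symm⟩

lemma inner_apply_swap_eq_zero {ι : Type*} [DecidableEq ι] {x y : ι → E} {i j k : ι}
    (hi : ⟪x i, y i⟫_𝕜 = 0 → ⟪x j, y i⟫_𝕜 = 0) (hj : ⟪x j, y j⟫_𝕜 = 0 → ⟪x i, y j⟫_𝕜 = 0)
    (hk : ⟪x k, y k⟫_𝕜 = 0) : ⟪x (Equiv.swap i j k), y k⟫_𝕜 = 0 := by
  rw [Equiv.swap_apply_def]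
  split_ifs with hki hkj
  · subst hki; exact hi hk
  · subst hkj; exact hj hk
  · exact hk

end InnerProduct

section ProductFamilies

local notation "ℂ²" => EuclideanSpace ℂ (Fin 2)

variable {m n : ℕ}

lemma PairwiseOrthProdFamily.of_perm_cols {V W : Fin m → Fin n → ℂ²}
    (hV : PairwiseOrthProdFamily V) (R : Set (Fin m)) (σ : Equiv.Perm (Fin n))
    (hWR : ∀ r ∈ R, ∀ k, W r k = V r (σ k)) (hWRc : ∀ r ∉ R, W r = V r)
    (hcross : ∀ r ∈ R, ∀ s ∉ R, ∀ k, ⟪V s k, V r k⟫_ℂ = 0 → ⟪V s (σ.symm k), V r k⟫_ℂ = 0) :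
    PairwiseOrthProdFamily W := by
  refine ⟨fun r k => ?_, fun r s hrs => ?_⟩
  · by_cases hr : r ∈ R
    · rw [hWR r hr]; exact hV.1 _ _
    · rw [hWRc r hr]; exact hV.1 _ _
  obtain ⟨k, hk⟩ := hV.2 r s hrs
  by_cases hr : r ∈ R <;> by_cases hs : s ∈ R
  · exact ⟨σ.symm k, by simpa [hWR r hr, hWR s hs] using hk⟩
  · refine ⟨σ.symm k, ?_⟩
    rw [hWR r hr, hWRc s hs, Equiv.apply_symm_apply, inner_eq_zero_symm]
    exact hcross r hr s hs k (inner_eq_zero_symm.1 hk)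
  · refine ⟨σ.symm k, ?_⟩
    rw [hWRc r hr, hWR s hs, Equiv.apply_symm_apply]
    exact hcross s hs r hr k hk
  · exact ⟨k, by rwa [hWRc r hr, hWRc s hs]⟩

lemma extendible_of_update {V : Fin m → Fin n → ℂ²} {w : Fin n → ℂ²} (hw : ∀ k, w k ≠ 0)
    {t u : Fin m} {k : Fin n} (hrows : ∀ r, r ≠ t → r ≠ u → ∃ l, ⟪w l, V r l⟫_ℂ = 0)
    (hu : ∃ l, l ≠ k ∧ ⟪w l, V u l⟫_ℂ = 0) (huk : ⟪w k, V u k⟫_ℂ = 0) (hVuk : V u k ≠ 0)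
    (hmult : ∀ r, r ≠ t → r ≠ u → ¬∃ s : ℂ, V r k = s • V u k) :
    Extendible V := by
  obtain ⟨x, hx0, hxt⟩ := exists_ne_zero_inner_eq_zero (𝕜 := ℂ) (by simp) (V t k)
  refine ⟨Function.update w k x, fun l => ?_, fun r => ?_⟩
  · rcases eq_or_ne l k with rfl | hlk
    · simpa using hx0
    · simpa [hlk] using hw l
  by_cases hrt : r = t
  · exact ⟨k, by simpa [hrt] using hxt⟩
  by_cases hru : r = u
  · obtain ⟨l, hlk, hl⟩ := hu
    exact ⟨l, by simpa [hru, hlk] using hl⟩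
  obtain ⟨l, hl⟩ := hrows r hrt hru
  rcases eq_or_ne l k with rfl | hlk
  · exact absurd (exists_eq_smul_of_inner_eq_zero (by simp) (hw l) hVuk huk hl) (hmult r hrt hru)
  · exact ⟨l, by simpa [hlk] using hl⟩

lemma not_extendible_of_exchange_rows {V W : Fin m → Fin n → ℂ²} (hV : ¬Extendible V)
    (hVnz : ∀ r k, V r k ≠ 0) {p q : Fin m} {S : Set (Fin n)}
    (hWin : ∀ k ∈ S, W p k = V q k ∧ W q k = V p k)
    (hWout : ∀ k ∉ S, W p k = V p k ∧ W q k = V q k)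
    (hWother : ∀ r, r ≠ p → r ≠ q → W r = V r)
    (hmult : ∀ r, r ≠ p → r ≠ q → ∀ k ∈ S,
      (¬∃ s : ℂ, V r k = s • V p k) ∧ ¬∃ s : ℂ, V r k = s • V q k) :
    ¬Extendible W := by
  rintro ⟨w, hw, hwW⟩
  apply hV
  have hrows : ∀ r, r ≠ p → r ≠ q → ∃ l, ⟪w l, V r l⟫_ℂ = 0 := fun r hrp hrq => by
    simpa [hWother r hrp hrq] using hwW r
  have hdirect : (∃ l, ⟪w l, V p l⟫_ℂ = 0) → (∃ l, ⟪w l, V q l⟫_ℂ = 0) → Extendible V := by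
    refine fun hp hq => ⟨w, hw, fun r => ?_⟩
    by_cases hrp : r = p
    · rwa [hrp]
    by_cases hrq : r = q
    · rwa [hrq]
    exact hrows r hrp hrq
  obtain ⟨kp, hkp⟩ := hwW p
  obtain ⟨kq, hkq⟩ := hwW q
  by_cases hp : kp ∈ S <;> by_cases hq : kq ∈ S
  · rw [(hWin kp hp).1] at hkp
    rw [(hWin kq hq).2] at hkq
    exact hdirect ⟨kq, hkq⟩ ⟨kp, hkp⟩
  · rw [(hWin kp hp).1] at hkp
    rw [(hWout kq hq).2] at hkq
    exact extendible_of_update hw hrows ⟨kq, (ne_of_mem_of_not_mem hp hq).symm, hkq⟩ hkp (hVnz q kp)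
      fun r hrp hrq => (hmult r hrp hrq kp hp).2
  · rw [(hWout kp hp).1] at hkp
    rw [(hWin kq hq).2] at hkq
    exact extendible_of_update hw (fun r hrq hrp => hrows r hrp hrq)
      ⟨kp, (ne_of_mem_of_not_mem hq hp).symm, hkp⟩ hkq (hVnz p kq)
      fun r hrq hrp => (hmult r hrp hrq kq hq).1
  · rw [(hWout kp hp).1] at hkp
    rw [(hWout kq hq).2] at hkq
    exact hdirect ⟨kp, hkp⟩ ⟨kq, hkq⟩

end ProductFamilies

theorem swap_submatrix_isUPB_general {m n : ℕ}
    (V W : Fin m → Fin n → EuclideanSpace ℂ (Fin 2))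
    (hV : IsUPB V)
    (p q : Fin m) (i j : Fin n)
    (a c : EuclideanSpace ℂ (Fin 2))
    (hpi : V p i = a) (hqj : V q j = a) (hpj : V p j = c) (hqi : V q i = c)
    (hmult₁ : ∀ r, r ≠ p →
      (¬ ∃ s : ℂ, V r i = s • a) ∧ (¬ ∃ s : ℂ, V r j = s • c))
    (hmult₂ : ∀ r, r ≠ q →
      (¬ ∃ s : ℂ, V r i = s • c) ∧ (¬ ∃ s : ℂ, V r j = s • a))
    (hcol : ∀ r, (⟪V r i, a⟫_ℂ = 0 ↔ ⟪V r j, a⟫_ℂ = 0) ∧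
                 (⟪V r i, c⟫_ℂ = 0 ↔ ⟪V r j, c⟫_ℂ = 0))
    (hWpi : W p i = c) (hWpj : W p j = a) (hWqi : W q i = a) (hWqj : W q j = c)
    (hWrest : ∀ r k, ¬ ((r = p ∨ r = q) ∧ (k = i ∨ k = j)) → W r k = V r k) :
    IsUPB W := by
  obtain ⟨hVorth, hm, hVext⟩ := hV
  have hWother : ∀ r, r ≠ p → r ≠ q → W r = V r := fun r hrp hrq =>
    funext fun k => hWrest r k (by tauto)
  have hWcols : ∀ r ∈ ({p, q} : Set (Fin m)), ∀ k, W r k = V r (Equiv.swap i j k) := by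
    rintro r hr k
    rw [Equiv.swap_apply_def]
    split_ifs with hki hkj
    · rcases hr with rfl | rfl <;> simp only [hki, hWpi, hpj, hWqi, hqj]
    · rcases hr with rfl | rfl <;> simp only [hkj, hWpj, hpi, hWqj, hqi]
    · exact hWrest r k (by tauto)
  have hWcolsc : ∀ r ∉ ({p, q} : Set (Fin m)), W r = V r := fun r hr => by
    simp only [Set.mem_insert_iff, Set.mem_singleton_iff, not_or] at hr
    exact hWother r hr.1 hr.2
  refine ⟨hVorth.of_perm_cols {p, q} (Equiv.swap i j) hWcols hWcolsc ?_, hm,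
    not_extendible_of_exchange_rows hVext hVorth.1 (S := {i, j}) ?_ ?_ hWother ?_⟩
  · rintro r hr s - k hk
    rw [Equiv.symm_swap]
    refine inner_apply_swap_eq_zero ?_ ?_ hk <;> rcases hr with rfl | rfl <;>
      simp only [hpi, hpj, hqi, hqj, hcol s, imp_self]
  · rintro k (rfl | rfl)
    · exact ⟨hWpi.trans hqi.symm, hWqi.trans hpi.symm⟩
    · exact ⟨hWpj.trans hqj.symm, hWqj.trans hpj.symm⟩
  · intro k hk
    simp only [Set.mem_insert_iff, Set.mem_singleton_iff] at hk
    exact ⟨hWrest p k (by tauto), hWrest q k (by tauto)⟩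
  · rintro r hrp hrq k (rfl | rfl)
    · rw [hpi, hqi]; exact ⟨(hmult₁ r hrp).1, (hmult₂ r hrq).1⟩
    · rw [hpj, hqj]; exact ⟨(hmult₁ r hrp).2, (hmult₂ r hrq).2⟩

/-- swapping the `2×2` submatrix `(a c; c a)` of a UPB under the
stated multiplicity and orthogonality-pattern hypotheses yields again a UPB. -/
theorem swap_submatrix_isUPB {m n : ℕ}
    (V W : Fin m → Fin n → EuclideanSpace ℂ (Fin 2))
    (hV : IsUPB V)
    (p q : Fin m) (hpq : p ≠ q) (i j : Fin n) (hij : i ≠ j)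
    (a c : EuclideanSpace ℂ (Fin 2))
    (hpi : V p i = a) (hqj : V q j = a) (hpj : V p j = c) (hqi : V q i = c)
    (hlin : LinearIndependent ℂ ![a, c]) (hac : ⟪a, c⟫_ℂ ≠ 0)
    (hmult₁ : ∀ r, r ≠ p →
      (¬ ∃ s : ℂ, V r i = s • a) ∧ (¬ ∃ s : ℂ, V r j = s • c))
    (hmult₂ : ∀ r, r ≠ q →
      (¬ ∃ s : ℂ, V r i = s • c) ∧ (¬ ∃ s : ℂ, V r j = s • a))
    (hcol : ∀ r, (⟪V r i, a⟫_ℂ = 0 ↔ ⟪V r j, a⟫_ℂ = 0) ∧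
                 (⟪V r i, c⟫_ℂ = 0 ↔ ⟪V r j, c⟫_ℂ = 0))
    (hWpi : W p i = c) (hWpj : W p j = a) (hWqi : W q i = a) (hWqj : W q j = c)
    (hWrest : ∀ r k, ¬ ((r = p ∨ r = q) ∧ (k = i ∨ k = j)) → W r k = V r k) :
    IsUPB W :=
  swap_submatrix_isUPB_general V W hV p q i j a c hpi hqj hpj hqi hmult₁ hmult₂ hcol hWpi hWpj hWqi
    hWqj hWrest
end

section
/- There exists a 7-qubit unextendible product basis of size 14, i.e., a family V : Fin 14 → Fin 7 → EuclideanSpace ℂ (Fin 2) of nonzero entries such that any two rows are orthogonal as product vectors and no nonzero product vector is orthogonal to all fourteen rows. -/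
/-!
Each qubit uses eight directions in `ℂ²` that form four orthogonal pairs, no two of them parallel;
row `p` takes the direction `design p i` on qubit `i`, and any two rows carry orthogonal partners
on some qubit. A nonzero vector of `ℂ²` is orthogonal to at most one of the eight directions, so a
product vector orthogonal to every row singles out one color per qubit such that each row agrees
with the chosen color on some qubit. Every color class of a qubit has at most two rows and
`14 = 7 * 2`, so the chosen classes would have to partition the rows into seven disjoint pairs, one
per qubit; a finite search shows that the design admits no such partition.
-/

open scoped InnerProductSpace

open Finset Function Matrix
open scoped ComplexConjugate

theorem EuclideanSpace.eq_zero_of_inner_eq_zero_of_det_ne_zero {𝕜 : Type*} [RCLike 𝕜]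
    {x y w : EuclideanSpace 𝕜 (Fin 2)}
    (hxy : x 0 * y 1 - x 1 * y 0 ≠ 0) (hx : ⟪w, x⟫_𝕜 = 0) (hy : ⟪w, y⟫_𝕜 = 0) : w = 0 := by
  simp only [PiLp.inner_apply, Fin.sum_univ_two, RCLike.inner_apply] at hx hy
  have hM : !![x 0, x 1; y 0, y 1] *ᵥ ![conj (w 0), conj (w 1)] = 0 := by
    ext j
    fin_cases j
    · simpa [mul_comm] using hx
    · simpa [mul_comm] using hy
  have hw := eq_zero_of_mulVec_eq_zero (by rwa [det_fin_two_of]) hM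
  ext j
  fin_cases j
  · simpa using congrFun hw 0
  · simpa using congrFun hw 1

def qubitDir : Fin 8 → EuclideanSpace ℂ (Fin 2) :=
  ![!₂[1, 1], !₂[1, -1], !₂[1, 2], !₂[2, -1], !₂[1, 3], !₂[3, -1], !₂[1, 0], !₂[0, 1]]

theorem qubitDir_ne_zero (a : Fin 8) : qubitDir a ≠ 0 := by
  intro h
  have h0 := congrArg (· 0) h
  have h1 := congrArg (· 1) h
  fin_cases a <;> simp_all [qubitDir]

theorem inner_qubitDir_eq_zero {a b : Fin 8} (hab : a.val / 2 = b.val / 2) (hne : a ≠ b) :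
    ⟪qubitDir a, qubitDir b⟫_ℂ = 0 := by
  fin_cases a <;> fin_cases b <;>
    simp_all [qubitDir, PiLp.inner_apply, Fin.sum_univ_two, map_ofNat]

theorem eq_zero_of_inner_qubitDir_eq_zero {a b : Fin 8} (hne : a ≠ b)
    {w : EuclideanSpace ℂ (Fin 2)}
    (ha : ⟪w, qubitDir a⟫_ℂ = 0) (hb : ⟪w, qubitDir b⟫_ℂ = 0) : w = 0 := by
  refine EuclideanSpace.eq_zero_of_inner_eq_zero_of_det_ne_zero ?_ ha hb
  fin_cases a <;> fin_cases b <;> simp_all [qubitDir] <;> norm_num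

theorem exists_cover_of_extendible {m n : ℕ} {κ : Type*} [Nonempty κ]
    {v : κ → EuclideanSpace ℂ (Fin 2)}
    (hv : ∀ a b, a ≠ b → ∀ w, ⟪w, v a⟫_ℂ = 0 → ⟪w, v b⟫_ℂ = 0 → w = 0)
    {col : Fin m → Fin n → κ} (h : Extendible fun p i => v (col p i)) :
    ∃ c : Fin n → κ, ∀ p, ∃ i, col p i = c i := by
  obtain ⟨w, hw, hcov⟩ := h
  refine ⟨fun i => Classical.epsilon fun k => ⟪w i, v k⟫_ℂ = 0, fun p => ?_⟩
  obtain ⟨i, hi⟩ := hcov p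
  exact ⟨i, by_contra fun hne => hw i (hv _ _ hne _ hi
    (Classical.epsilon_spec (p := fun k => ⟪w i, v k⟫_ℂ = 0) ⟨_, hi⟩))⟩

section Cover

variable {α ι κ : Type*} [Fintype α] [DecidableEq α]

section Counting

variable [Fintype ι] {A : ι → Finset α} {b : ℕ}

theorem card_le_sum_card_of_forall_mem (hcov : ∀ a, ∃ i, a ∈ A i) :
    Fintype.card α ≤ ∑ i, #(A i) :=
  card_univ (α := α) ▸ (card_le_card fun a _ => by simpa using hcov a).trans card_biUnion_le

theorem card_eq_of_forall_mem_of_card_le (hA : ∀ i, #(A i) ≤ b)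
    (hα : Fintype.card α = Fintype.card ι * b) (hcov : ∀ a, ∃ i, a ∈ A i) (i : ι) :
    #(A i) = b := by
  have hsum : ∑ k, #(A k) = ∑ _k : ι, b := by
    refine le_antisymm (sum_le_sum fun k _ => hA k) ?_
    simpa [← hα] using card_le_sum_card_of_forall_mem hcov
  exact (sum_eq_sum_iff_of_le fun k _ => hA k).mp hsum i (mem_univ i)

theorem pairwise_disjoint_of_forall_mem_of_card_le [DecidableEq ι] (hA : ∀ i, #(A i) ≤ b)
    (hα : Fintype.card α = Fintype.card ι * b) (hcov : ∀ a, ∃ i, a ∈ A i) :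
    Pairwise (Disjoint on A) := by
  intro i j hij
  rw [onFun, disjoint_left]
  intro a hai haj
  set A' := update A j ((A j).erase a)
  have hcov' : ∀ x, ∃ k, x ∈ A' k := by
    intro x
    obtain ⟨k, hk⟩ := hcov x
    by_cases hxa : x = a
    · exact ⟨i, by simpa [A', update_of_ne hij, hxa] using hai⟩
    by_cases hkj : k = j
    · subst hkj; exact ⟨k, by simpa [A', hxa] using hk⟩
    · exact ⟨k, by simpa [A', update_of_ne hkj] using hk⟩
  have hlt : ∑ k, #(A' k) < ∑ _k : ι, b := by
    refine sum_lt_sum (fun k _ => ?_) ⟨j, mem_univ _, ?_⟩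
    · by_cases hkj : k = j
      · subst hkj; simpa [A'] using card_erase_le.trans (hA k)
      · simpa [A', update_of_ne hkj] using hA k
    · simpa [A', card_erase_of_mem haj] using
        (Nat.sub_lt (card_pos.mpr ⟨a, haj⟩) one_pos).trans_le (hA j)
  have := card_le_sum_card_of_forall_mem hcov'
  simp only [sum_const, card_univ, smul_eq_mul] at hlt
  omega

end Counting

variable (A : ι → κ → Finset α) (b : ℕ)

/-- `U` is the set of points covered so far; the rest must be partitioned by `b`-element classes
`A i k`, one for each `i ∈ is`. -/
def CoverableBy : List ι → Finset α → Prop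
  | [], U => U = univ
  | i :: is, U => ∃ k, #(A i k) = b ∧ Disjoint (A i k) U ∧ CoverableBy is (U ∪ A i k)

instance CoverableBy.decidable [Fintype κ] : ∀ is U, Decidable (CoverableBy A b is U)
  | [], U => inferInstanceAs (Decidable (U = univ))
  | i :: is, U =>
    haveI := fun V => CoverableBy.decidable is V
    inferInstanceAs
      (Decidable (∃ k, #(A i k) = b ∧ Disjoint (A i k) U ∧ CoverableBy A b is (U ∪ A i k)))

theorem coverableBy_of_pairwise_disjoint {c : ι → κ} (hb : ∀ i, #(A i (c i)) = b) :
    ∀ {is : List ι} {U : Finset α}, is.Pairwise (Disjoint on fun i => A i (c i)) →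
      (∀ i ∈ is, Disjoint (A i (c i)) U) → (∀ a, a ∈ U ∨ ∃ i ∈ is, a ∈ A i (c i)) →
      CoverableBy A b is U
  | [], U, _, _, hcov => eq_univ_of_forall fun a => by simpa using hcov a
  | i :: is, U, hpw, hdisj, hcov => by
    rw [List.pairwise_cons] at hpw
    refine ⟨c i, hb i, hdisj i List.mem_cons_self, coverableBy_of_pairwise_disjoint hb hpw.2
      (fun j hj => disjoint_union_right.mpr ⟨hdisj j (List.mem_cons_of_mem _ hj),
        (hpw.1 j hj).symm⟩) fun a => ?_⟩
    rcases hcov a with ha | ⟨j, hj, ha⟩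
    · exact .inl (mem_union_left _ ha)
    rcases List.mem_cons.mp hj with rfl | hj
    · exact .inl (mem_union_right _ ha)
    · exact .inr ⟨j, hj, ha⟩

end Cover

def colorClass {m n k : ℕ} (col : Fin m → Fin n → Fin k) (i : Fin n) (c : Fin k) :
    Finset (Fin m) :=
  {p | col p i = c}

def design : Fin 14 → Fin 7 → Fin 8 :=
  ![![6, 4, 2, 4, 4, 2, 4],
    ![7, 2, 4, 0, 2, 4, 0],
    ![0, 6, 5, 0, 0, 0, 5],
    ![2, 7, 2, 2, 4, 3, 1],
    ![4, 0, 6, 1, 0, 3, 0],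
    ![0, 3, 7, 2, 5, 1, 2],
    ![3, 1, 4, 6, 3, 0, 5],
    ![4, 3, 3, 7, 1, 4, 3],
    ![3, 2, 0, 5, 6, 1, 1],
    ![1, 4, 5, 5, 7, 2, 2],
    ![5, 0, 1, 1, 5, 6, 3],
    ![5, 5, 1, 3, 3, 7, 4],
    ![2, 5, 0, 3, 1, 5, 6],
    ![1, 1, 3, 4, 2, 5, 7]]

theorem design_separated : ∀ p q, p ≠ q →
    ∃ i, (design p i).val / 2 = (design q i).val / 2 ∧ design p i ≠ design q i := by
  decide

theorem card_colorClass_design_le : ∀ i c, #(colorClass design i c) ≤ 2 := by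
  decide

theorem not_coverableBy_design : ¬ CoverableBy (colorClass design) 2 (List.finRange 7) ∅ := by
  decide +kernel

theorem design_not_covered : ¬ ∃ c : Fin 7 → Fin 8, ∀ p, ∃ i, design p i = c i := by
  rintro ⟨c, hc⟩
  have hcov : ∀ p, ∃ i, p ∈ colorClass design i (c i) := by simpa [colorClass] using hc
  have hle i := card_colorClass_design_le i (c i)
  have hdisj := pairwise_disjoint_of_forall_mem_of_card_le hle (by simp) hcov
  refine not_coverableBy_design (coverableBy_of_pairwise_disjoint (colorClass design) 2
    (card_eq_of_forall_mem_of_card_le hle (by simp) hcov)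
    ((List.nodup_finRange 7).pairwise_of_forall_ne fun _ _ _ _ hij => hdisj hij)
    (fun _ _ => disjoint_empty_right _) fun p => .inr ?_)
  simpa using hcov p

/-- there exists a 7-qubit UPB of size 14. -/
theorem exists_upb_14_7 :
    ∃ V : Fin 14 → Fin 7 → EuclideanSpace ℂ (Fin 2), IsUPB V := by
  refine ⟨fun p i => qubitDir (design p i),
    ⟨fun p i => qubitDir_ne_zero _, fun p q hpq => ?_⟩, by norm_num,
    fun h => design_not_covered (exists_cover_of_extendible
      (fun _ _ hne _ => eq_zero_of_inner_qubitDir_eq_zero hne) h)⟩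
  obtain ⟨i, hdiv, hne⟩ := design_separated p q hpq
  exact ⟨i, inner_qubitDir_eq_zero hdiv hne⟩
end

section
/- For every n ≥ 4, there exists an n-qubit unextendible product basis of size 2^n − 4. -/
/-!
Start from the three-qubit Shifts UPB `{|0,1,+⟩, |1,+,0⟩, |+,0,1⟩, |−,−,−⟩}`, tensor each of its
four vectors with `|0⟩` on the remaining `n - 3` qubits, and add the `2^n - 8` computational basis
vectors whose last `n - 3` digits are not all `0`. A product vector orthogonal to all of these has
every factor beyond the third proportional to `|0⟩`, since otherwise it overlaps one of the added
basis vectors; so its first three factors would extend Shifts. That is impossible: Shifts has four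
vectors on three qubits, so two of them would be met in the same qubit, but any two vectors in a
column of Shifts span `ℂ²`.
-/

open scoped InnerProductSpace

local notation "ℂ²" => EuclideanSpace ℂ (Fin 2)

lemma inner_eq_conj_mul_add_conj_mul (w u : ℂ²) :
    ⟪w, u⟫_ℂ = (starRingEnd ℂ) (w 0) * u 0 + (starRingEnd ℂ) (w 1) * u 1 := by
  simp [PiLp.inner_apply, Fin.sum_univ_two, mul_comm]

lemma eq_zero_of_inner_eq_zero_of_det_ne_zero {u v w : ℂ²}
    (hdet : u 0 * v 1 - u 1 * v 0 ≠ 0) (hu : ⟪w, u⟫_ℂ = 0) (hv : ⟪w, v⟫_ℂ = 0) : w = 0 := by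
  rw [inner_eq_conj_mul_add_conj_mul] at hu hv
  have h0 : (starRingEnd ℂ) (w 0) * (u 0 * v 1 - u 1 * v 0) = 0 := by
    linear_combination v 1 * hu - u 1 * hv
  have h1 : (starRingEnd ℂ) (w 1) * (u 0 * v 1 - u 1 * v 0) = 0 := by
    linear_combination u 0 * hv - v 0 * hu
  ext s
  fin_cases s
  · simpa [hdet] using h0
  · simpa [hdet] using h1

lemma EuclideanSpace.exists_apply_ne_zero {𝕜 ι : Type*} [RCLike 𝕜] {v : EuclideanSpace 𝕜 ι}
    (hv : v ≠ 0) : ∃ s, v s ≠ 0 := by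
  by_contra! h
  exact hv (by ext s; simp [h])

lemma not_extendible_of_lt {m n : ℕ} {V : Fin m → Fin n → ℂ²} (hnm : n < m)
    (hV : ∀ p q i, p ≠ q → ∀ w, ⟪w, V p i⟫_ℂ = 0 → ⟪w, V q i⟫_ℂ = 0 → w = 0) :
    ¬ Extendible V := by
  rintro ⟨w, hw, horth⟩
  choose f hf using horth
  obtain ⟨p, q, hpq, hf_eq⟩ := Fintype.exists_ne_map_eq_of_card_lt f (by simpa using hnm)
  exact hw (f p) (hV p q (f p) hpq _ (hf p) (hf_eq ▸ hf q))

lemma exists_digits_apply_ne_zero {ι : Type*} {d : ℕ} {w : ι → EuclideanSpace ℂ (Fin d)}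
    (hw : ∀ i, w i ≠ 0) {j : ι} {t : Fin d} (hjt : w j t ≠ 0) :
    ∃ c : ι → Fin d, c j = t ∧ ∀ i, w i (c i) ≠ 0 := by
  classical
  choose c hc using fun i => EuclideanSpace.exists_apply_ne_zero (hw i)
  refine ⟨Function.update c j t, by simp, fun i => ?_⟩
  by_cases hij : i = j
  · subst hij; simpa using hjt
  · simpa [hij] using hc i

lemma isUPB_comp_equiv {ι : Type*} {N n : ℕ} {V : ι → Fin n → ℂ²} (e : Fin N ≃ ι)
    (hne : ∀ r i, V r i ≠ 0) (horth : Pairwise fun r s => ∃ i, ⟪V r i, V s i⟫_ℂ = 0)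
    (hN : N < 2 ^ n)
    (hV : ∀ w : Fin n → ℂ², (∀ i, w i ≠ 0) → ∃ r, ∀ i, ⟪w i, V r i⟫_ℂ ≠ 0) :
    IsUPB (V ∘ e) := by
  refine ⟨⟨fun p => hne (e p), fun p q hpq => horth (e.injective.ne hpq)⟩, hN, ?_⟩
  rintro ⟨w, hw, horth'⟩
  obtain ⟨r, hr⟩ := hV w hw
  obtain ⟨i, hi⟩ := horth' (e.symm r)
  exact hr i (by simpa using hi)

noncomputable def shifts : Fin 4 → Fin 3 → ℂ² :=
  ![![!₂[1, 0], !₂[0, 1], !₂[1, 1]],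
    ![!₂[0, 1], !₂[1, 1], !₂[1, 0]],
    ![!₂[1, 1], !₂[1, 0], !₂[0, 1]],
    ![!₂[1, -1], !₂[1, -1], !₂[1, -1]]]

lemma shifts_ne_zero (p : Fin 4) (i : Fin 3) : shifts p i ≠ 0 := by
  intro h
  have h0 := congrArg (fun v : ℂ² => v 0) h
  have h1 := congrArg (fun v : ℂ² => v 1) h
  fin_cases p <;> fin_cases i <;> simp_all [shifts]

lemma shifts_orthogonal {p q : Fin 4} (hpq : p ≠ q) : ∃ i, ⟪shifts p i, shifts q i⟫_ℂ = 0 := by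
  fin_cases p <;> fin_cases q <;> simp only [ne_eq, not_true_eq_false] at hpq <;>
    first
    | (use 0; simp [shifts, inner_eq_conj_mul_add_conj_mul]; done)
    | (use 1; simp [shifts, inner_eq_conj_mul_add_conj_mul]; done)
    | (use 2; simp [shifts, inner_eq_conj_mul_add_conj_mul])

lemma shifts_det_ne_zero {p q : Fin 4} (hpq : p ≠ q) (i : Fin 3) :
    shifts p i 0 * shifts q i 1 - shifts p i 1 * shifts q i 0 ≠ 0 := by
  fin_cases p <;> fin_cases q <;> simp only [ne_eq, not_true_eq_false] at hpq <;>
    fin_cases i <;> norm_num [shifts]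

lemma isUPB_shifts : IsUPB shifts :=
  ⟨⟨shifts_ne_zero, fun _ _ => shifts_orthogonal⟩, by norm_num,
    not_extendible_of_lt (by norm_num) fun _ _ i hpq _ =>
      eq_zero_of_inner_eq_zero_of_det_ne_zero (shifts_det_ne_zero hpq i)⟩

section Extension

variable {m k l : ℕ}

abbrev BitsWithNonzeroTail (k l : ℕ) : Type :=
  ↥(Set.range fun y : Fin k → Fin 2 => Fin.append y (0 : Fin l → Fin 2))ᶜ

lemma mem_range_append_zero_iff {x : Fin (k + l) → Fin 2} :
    x ∈ Set.range (fun y : Fin k → Fin 2 => Fin.append y (0 : Fin l → Fin 2)) ↔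
      ∀ j : Fin l, x (Fin.natAdd k j) = 0 := by
  constructor
  · rintro ⟨y, rfl⟩ j
    simp
  · intro hx
    refine ⟨fun i => x (Fin.castAdd l i), funext fun i => ?_⟩
    refine Fin.addCases (fun i => ?_) (fun j => ?_) i <;> simp [hx]

lemma card_bitsWithNonzeroTail :
    Fintype.card (BitsWithNonzeroTail k l) = 2 ^ (k + l) - 2 ^ k := by
  rw [Fintype.card_compl_set, Set.card_range_of_injective]
  · simp
  · intro y y' h
    funext i
    simpa using congrFun h (Fin.castAdd l i)

noncomputable def padWithBasis (S : Fin m → Fin k → ℂ²) :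
    Fin m ⊕ BitsWithNonzeroTail k l → Fin (k + l) → ℂ²
  | .inl p => Fin.append (S p) fun _ => EuclideanSpace.single 0 1
  | .inr x => fun i => EuclideanSpace.single (x.1 i) 1

variable {S : Fin m → Fin k → ℂ²}

lemma padWithBasis_ne_zero (hS : ∀ p i, S p i ≠ 0) (r : Fin m ⊕ BitsWithNonzeroTail k l)
    (i : Fin (k + l)) : padWithBasis S r i ≠ 0 := by
  rcases r with p | x
  · refine Fin.addCases (fun i => ?_) (fun j => ?_) i
    · simpa [padWithBasis] using hS p i
    · simp [padWithBasis]
  · simp [padWithBasis]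

lemma padWithBasis_inl_inr_orthogonal (p : Fin m) (x : BitsWithNonzeroTail k l) :
    ∃ i, ⟪padWithBasis S (.inl p) i, padWithBasis S (.inr x) i⟫_ℂ = 0 := by
  obtain ⟨j, hj⟩ : ∃ j : Fin l, x.1 (Fin.natAdd k j) ≠ 0 := by
    by_contra! hx
    exact x.2 (mem_range_append_zero_iff.2 hx)
  exact ⟨Fin.natAdd k j, by simp [padWithBasis, EuclideanSpace.inner_single_left, Ne.symm hj]⟩

lemma padWithBasis_orthogonal (hS : ∀ p q : Fin m, p ≠ q → ∃ i, ⟪S p i, S q i⟫_ℂ = 0) :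
    Pairwise fun r s : Fin m ⊕ BitsWithNonzeroTail k l =>
      ∃ i, ⟪padWithBasis S r i, padWithBasis S s i⟫_ℂ = 0 := by
  rintro (p | x) (q | y) hrs
  · obtain ⟨i, hi⟩ := hS p q (by simpa using hrs)
    exact ⟨Fin.castAdd l i, by simpa [padWithBasis] using hi⟩
  · exact padWithBasis_inl_inr_orthogonal p y
  · obtain ⟨i, hi⟩ := padWithBasis_inl_inr_orthogonal (S := S) q x
    exact ⟨i, inner_eq_zero_symm.1 hi⟩
  · obtain ⟨i, hi⟩ := Function.ne_iff.1 (Subtype.coe_ne_coe.2 (by simpa using hrs))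
    exact ⟨i, by simp [padWithBasis, EuclideanSpace.inner_single_left, Ne.symm hi]⟩

lemma padWithBasis_unextendible (hS : ¬ Extendible S) (w : Fin (k + l) → ℂ²)
    (hw : ∀ i, w i ≠ 0) : ∃ r, ∀ i, ⟪w i, padWithBasis S r i⟫_ℂ ≠ 0 := by
  by_contra! h
  have htail (j : Fin l) (t : Fin 2) (ht : t ≠ 0) : w (Fin.natAdd k j) t = 0 := by
    by_contra hjt
    obtain ⟨c, hcj, hc⟩ := exists_digits_apply_ne_zero hw hjt
    obtain ⟨i, hi⟩ := h (.inr ⟨c, fun hmem => ht (hcj ▸ mem_range_append_zero_iff.1 hmem j)⟩)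
    exact hc i (by simpa [padWithBasis, EuclideanSpace.inner_single_right] using hi)
  have hhead (j : Fin l) : w (Fin.natAdd k j) 0 ≠ 0 := fun h0 =>
    hw (Fin.natAdd k j) <| by
      ext t
      rcases eq_or_ne t 0 with rfl | ht
      · simpa using h0
      · simpa using htail j t ht
  refine hS ⟨fun i => w (Fin.castAdd l i), fun i => hw _, fun p => ?_⟩
  obtain ⟨i, hi⟩ := h (.inl p)
  induction i using Fin.addCases with
  | left i => exact ⟨i, by simpa [padWithBasis] using hi⟩
  | right j =>
    exact absurd (by simpa [padWithBasis, EuclideanSpace.inner_single_right] using hi) (hhead j)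

theorem IsUPB.exists_isUPB_add_qubits (hS : IsUPB S) (l : ℕ) :
    ∃ V : Fin (m + (2 ^ (k + l) - 2 ^ k)) → Fin (k + l) → ℂ², IsUPB V := by
  obtain ⟨⟨hne, horth⟩, hm, hunext⟩ := hS
  have hcard : Fintype.card (Fin m ⊕ BitsWithNonzeroTail k l) = m + (2 ^ (k + l) - 2 ^ k) := by
    rw [Fintype.card_sum, Fintype.card_fin, card_bitsWithNonzeroTail]
  have hk : 2 ^ k ≤ 2 ^ (k + l) := Nat.pow_le_pow_right two_pos (Nat.le_add_right k l)
  exact ⟨_, isUPB_comp_equiv (Fintype.equivFinOfCardEq hcard).symm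
    (padWithBasis_ne_zero hne) (padWithBasis_orthogonal horth) (by omega)
    (padWithBasis_unextendible hunext)⟩

end Extension

/-- for every `n ≥ 4` there exists an `n`-qubit UPB of size
`2^n − 4`. -/
theorem exists_upb_size_pow_sub_four (n : ℕ) (hn : 4 ≤ n) :
    ∃ V : Fin (2 ^ n - 4) → Fin n → EuclideanSpace ℂ (Fin 2), IsUPB V := by
  obtain ⟨l, rfl⟩ := Nat.exists_eq_add_of_le (Nat.le_of_succ_le hn)
  have h8 : 2 ^ 3 ≤ 2 ^ (3 + l) := Nat.pow_le_pow_right two_pos (Nat.le_add_right 3 l)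
  have hsize : 4 + (2 ^ (3 + l) - 2 ^ 3) = 2 ^ (3 + l) - 4 := by omega
  rw [← hsize]
  exact isUPB_shifts.exists_isUPB_add_qubits l
end
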